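/- arXiv:2210.01876 — 5 statements merged into one kernel-verified Lean document; each statement's English description precedes it below -/
import Mathlib

section
/- Let m ∈ ℕ, let E_1, …, E_m be Banach lattices, let G be a Banach space, and suppose that some E_j has the positive Schur property. Then every continuous m-linear operator A : E_1 × ⋯ × E_m → G is almost Dunford–Pettis. -/
/-!
If `|x n|` were not weakly null for a disjoint weakly null sequence `x`, some functional `f`
would satisfy `ε ≤ f |x n|` along a subsequence. Disjointness gives `|∑ λₖ • xₖ| = ∑ λₖ • |xₖ|`
for `λ ≥ 0`, so `ε ≤ f |z|` on the convex hull of that subsequence and hence on its closure;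
but the closure contains `0`, because a weakly null sequence cannot be separated from `0` by
Hahn–Banach. Thus `|x j n|` is a positive weakly null sequence, norm null by the positive Schur
property, while the other factors stay bounded by the uniform boundedness principle.
-/

open Filter Topology

/-- A sequence in a Banach lattice is disjoint if `|x n| ⊓ |x k| = 0` for `n ≠ k`. -/
def DisjointSeq {E : Type*} [NormedAddCommGroup E] [Lattice E] [HasSolidNorm E]
    [IsOrderedAddMonoid E] (x : ℕ → E) : Prop :=
  ∀ n k, n ≠ k → |x n| ⊓ |x k| = 0

/-- A sequence is weakly null if `f (x n) → 0` for every continuous linear functional `f`. -/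
def WeaklyNull {E : Type*} [NormedAddCommGroup E] [NormedSpace ℝ E] (x : ℕ → E) : Prop :=
  ∀ f : E →L[ℝ] ℝ, Tendsto (fun n => f (x n)) atTop (𝓝 0)

/-- A Banach lattice has the positive Schur property if every weakly null sequence of
positive elements is norm null. -/
def PositiveSchurProperty (E : Type*) [NormedAddCommGroup E] [Lattice E] [HasSolidNorm E]
    [IsOrderedAddMonoid E] [NormedSpace ℝ E] : Prop :=
  ∀ x : ℕ → E, (∀ n, 0 ≤ x n) → WeaklyNull x → Tendsto (fun n => ‖x n‖) atTop (𝓝 0)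

section LatticeOrderedGroup

variable {α : Type*} [Lattice α] [AddCommGroup α] [IsOrderedAddMonoid α]

lemma nonneg_of_two_pow_nsmul_nonneg {a : α} (k : ℕ) (h : 0 ≤ 2 ^ k • a) : 0 ≤ a := by
  induction k with
  | zero => simpa using h
  | succ k ih => exact ih (nsmul_two_semiclosed (by rwa [← mul_nsmul, ← pow_succ]))

lemma dyadic_smul_nonneg {𝕜 : Type*} [Field 𝕜] [CharZero 𝕜] [Module 𝕜 α] {a : α}
    (ha : 0 ≤ a) (m k : ℕ) : 0 ≤ ((m : 𝕜) / 2 ^ k) • a := by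
  refine nonneg_of_two_pow_nsmul_nonneg k ?_
  rw [← Nat.cast_smul_eq_nsmul 𝕜, smul_smul, Nat.cast_pow, Nat.cast_two,
    mul_div_cancel₀ _ (pow_ne_zero k two_ne_zero), Nat.cast_smul_eq_nsmul]
  exact nsmul_nonneg ha m

lemma add_inf_le_inf_add_inf {a b c : α} (ha : 0 ≤ a) (hb : 0 ≤ b) (hc : 0 ≤ c) :
    (a + b) ⊓ c ≤ a ⊓ c + b ⊓ c := by
  rw [inf_add, add_inf, add_inf]
  refine le_inf (le_inf inf_le_left ?_) (le_inf ?_ ?_)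
  · exact inf_le_right.trans (le_add_of_nonneg_left ha)
  · exact inf_le_right.trans (le_add_of_nonneg_right hb)
  · exact inf_le_right.trans (le_add_of_nonneg_left hc)

lemma inf_sum_eq_zero {ι : Type*} {s : Finset ι} {a : α} {b : ι → α} (ha : 0 ≤ a)
    (hb : ∀ i ∈ s, 0 ≤ b i) (hab : ∀ i ∈ s, a ⊓ b i = 0) : a ⊓ ∑ i ∈ s, b i = 0 := by
  classical
  induction s using Finset.induction_on with
  | empty => simpa using ha
  | insert i s hi ih =>
    simp only [Finset.mem_insert, forall_eq_or_imp] at hb hab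
    rw [Finset.sum_insert hi]
    refine le_antisymm ?_ (le_inf ha (add_nonneg hb.1 (Finset.sum_nonneg hb.2)))
    calc a ⊓ (b i + ∑ j ∈ s, b j) ≤ b i ⊓ a + (∑ j ∈ s, b j) ⊓ a := by
          rw [inf_comm]; exact add_inf_le_inf_add_inf hb.1 (Finset.sum_nonneg hb.2) ha
      _ = 0 := by rw [inf_comm, hab.1, inf_comm, ih hb.2 hab.2, add_zero]

lemma le_of_le_add_of_inf_eq_zero {a b c : α} (ha : 0 ≤ a) (hb : 0 ≤ b) (hc : 0 ≤ c)
    (habc : a ≤ b + c) (hac : a ⊓ c = 0) : a ≤ b :=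
  calc a = (b + c) ⊓ a := (inf_eq_right.2 habc).symm
    _ ≤ b ⊓ a + c ⊓ a := add_inf_le_inf_add_inf hb hc ha
    _ ≤ b := by rw [inf_comm c, hac, add_zero]; exact inf_le_left

lemma abs_add_of_abs_inf_abs_eq_zero {a b : α} (h : |a| ⊓ |b| = 0) : |a + b| = |a| + |b| := by
  refine le_antisymm (abs_add_le a b) ?_
  have ha : |a| ≤ |a + b| := le_of_le_add_of_inf_eq_zero (abs_nonneg _) (abs_nonneg _)
    (abs_nonneg _) (by simpa using abs_add_le (a + b) (-b)) h
  have hb : |b| ≤ |a + b| := le_of_le_add_of_inf_eq_zero (abs_nonneg _) (abs_nonneg _)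
    (abs_nonneg _) (by simpa using abs_add_le (a + b) (-a)) (by rwa [inf_comm])
  rw [← inf_add_sup, h, zero_add]
  exact sup_le ha hb

lemma abs_sum_of_pairwise_abs_inf_abs_eq_zero {ι : Type*} {s : Finset ι} {a : ι → α}
    (h : (s : Set ι).Pairwise fun i j => |a i| ⊓ |a j| = 0) :
    |∑ i ∈ s, a i| = ∑ i ∈ s, |a i| := by
  classical
  induction s using Finset.induction_on with
  | empty => simp
  | insert i s hi ih =>
    rw [Finset.coe_insert, Set.pairwise_insert] at h
    have ih := ih h.1
    have hdisj : |a i| ⊓ |∑ j ∈ s, a j| = 0 := by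
      rw [ih]
      exact inf_sum_eq_zero (abs_nonneg _) (fun j _ => abs_nonneg _)
        fun j hj => (h.2 j hj fun hij => hi (hij ▸ hj)).1
    rw [Finset.sum_insert hi, Finset.sum_insert hi, abs_add_of_abs_inf_abs_eq_zero hdisj, ih]

end LatticeOrderedGroup

section OrderedModule

variable {𝕜 M : Type*} [Field 𝕜] [LinearOrder 𝕜] [IsStrictOrderedRing 𝕜]
  [Lattice M] [AddCommGroup M] [Module 𝕜 M] [PosSMulMono 𝕜 M]

lemma smul_sup_of_nonneg {c : 𝕜} (hc : 0 ≤ c) (a b : M) : c • (a ⊔ b) = c • a ⊔ c • b := by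
  rcases hc.eq_or_lt with rfl | hc
  · simp
  · exact (OrderIso.smulRight hc).map_sup a b

lemma smul_inf_of_nonneg {c : 𝕜} (hc : 0 ≤ c) (a b : M) : c • (a ⊓ b) = c • a ⊓ c • b := by
  rcases hc.eq_or_lt with rfl | hc
  · simp
  · exact (OrderIso.smulRight hc).map_inf a b

lemma abs_smul_of_nonneg {c : 𝕜} (hc : 0 ≤ c) (a : M) : |c • a| = c • |a| := by
  rw [abs, abs, smul_sup_of_nonneg hc, smul_neg]

variable [IsOrderedAddMonoid M]

lemma abs_smul_inf_abs_smul_eq_zero {a b : M} (h : |a| ⊓ |b| = 0) {c d : 𝕜} (hc : 0 ≤ c)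
    (hd : 0 ≤ d) : |c • a| ⊓ |d • b| = 0 := by
  rw [abs_smul_of_nonneg hc, abs_smul_of_nonneg hd]
  refine le_antisymm ?_ (le_inf (smul_nonneg hc (abs_nonneg a)) (smul_nonneg hd (abs_nonneg b)))
  calc c • |a| ⊓ d • |b| ≤ max c d • |a| ⊓ max c d • |b| :=
        inf_le_inf (smul_le_smul_of_nonneg_right (le_max_left c d) (abs_nonneg a))
          (smul_le_smul_of_nonneg_right (le_max_right c d) (abs_nonneg b))
    _ = 0 := by rw [← smul_inf_of_nonneg (hc.trans (le_max_left c d)), h, smul_zero]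

end OrderedModule

/-- The order of a normed lattice is not assumed compatible with real scalars: this follows
from `0 ≤ 2 • a → 0 ≤ a` (dyadic scalars) and the closedness of the positive cone. -/
instance HasSolidNorm.posSMulMono {E : Type*} [NormedAddCommGroup E] [Lattice E]
    [HasSolidNorm E] [IsOrderedAddMonoid E] [NormedSpace ℝ E] : PosSMulMono ℝ E :=
  PosSMulMono.of_smul_nonneg fun c hc x hx => by
    have hdyadic : Tendsto (fun k : ℕ => (⌊c * 2 ^ k⌋₊ : ℝ) / 2 ^ k) atTop (𝓝 c) :=
      (tendsto_nat_floor_mul_div_atTop hc).comp (tendsto_pow_atTop_atTop_of_one_lt one_lt_two)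
    exact ge_of_tendsto' (hdyadic.smul_const x) fun k => dyadic_smul_nonneg hx _ k

namespace WeaklyNull

variable {E : Type*} [NormedAddCommGroup E] [NormedSpace ℝ E] {x : ℕ → E}

lemma comp_strictMono (hx : WeaklyNull x) {φ : ℕ → ℕ} (hφ : StrictMono φ) :
    WeaklyNull (x ∘ φ) :=
  fun f => (hx f).comp hφ.tendsto_atTop

lemma zero_mem_closure_convexHull (hx : WeaklyNull x) :
    (0 : E) ∈ closure (convexHull ℝ (Set.range x)) := by
  by_contra h
  obtain ⟨f, u, hf0, hfu⟩ := geometric_hahn_banach_point_closed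
    (convex_convexHull ℝ _).closure isClosed_closure h
  rw [map_zero] at hf0
  obtain ⟨n, hn⟩ := ((hx f).eventually (gt_mem_nhds hf0)).exists
  exact (hfu _ (subset_closure (subset_convexHull ℝ _ ⟨n, rfl⟩))).not_gt hn

lemma exists_norm_le (hx : WeaklyNull x) : ∃ C, ∀ n, ‖x n‖ ≤ C := by
  obtain ⟨C, hC⟩ := banach_steinhaus (g := fun n => NormedSpace.inclusionInDoubleDualLi ℝ (x n))
    fun f => ⟨_, fun n => (hx f).norm.bddAbove_range.some_mem ⟨n, rfl⟩⟩
  exact ⟨C, fun n => (LinearIsometry.norm_map _ (x n)).symm.trans_le (hC n)⟩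

end WeaklyNull

namespace DisjointSeq

variable {E : Type*} [NormedAddCommGroup E] [Lattice E] [HasSolidNorm E] [IsOrderedAddMonoid E]
  {x : ℕ → E}

lemma comp_strictMono (hx : DisjointSeq x) {φ : ℕ → ℕ} (hφ : StrictMono φ) :
    DisjointSeq (x ∘ φ) :=
  fun _ _ h => hx _ _ (hφ.injective.ne h)

variable [NormedSpace ℝ E]

lemma le_apply_abs_of_mem_convexHull (hx : DisjointSeq x) (f : E →L[ℝ] ℝ) {ε : ℝ}
    (hε : ∀ n, ε ≤ f |x n|) {z : E} (hz : z ∈ convexHull ℝ (Set.range x)) : ε ≤ f |z| := by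
  rw [convexHull_range_eq_exists_affineCombination] at hz
  obtain ⟨s, w, hw0, hw1, rfl⟩ := hz
  rw [Finset.affineCombination_eq_linear_combination s x w hw1]
  have habs : |∑ n ∈ s, w n • x n| = ∑ n ∈ s, w n • |x n| := by
    rw [abs_sum_of_pairwise_abs_inf_abs_eq_zero fun n hn k hk hnk =>
      abs_smul_inf_abs_smul_eq_zero (hx n k hnk) (hw0 n hn) (hw0 k hk)]
    exact Finset.sum_congr rfl fun n hn => abs_smul_of_nonneg (hw0 n hn) _
  calc ε = ∑ n ∈ s, w n * ε := by rw [← Finset.sum_mul, hw1, one_mul]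
    _ ≤ ∑ n ∈ s, w n * f |x n| :=
      Finset.sum_le_sum fun n hn => mul_le_mul_of_nonneg_left (hε n) (hw0 n hn)
    _ = f |∑ n ∈ s, w n • x n| := by simp only [habs, map_sum, map_smul, smul_eq_mul]

lemma not_frequently_le_apply_abs (hx : DisjointSeq x) (hw : WeaklyNull x) (f : E →L[ℝ] ℝ)
    {ε : ℝ} (hε : 0 < ε) : ¬∃ᶠ n in atTop, ε ≤ f |x n| := by
  intro hfreq
  obtain ⟨φ, hφ, hφε⟩ := extraction_of_frequently_atTop hfreq
  have hclosed : IsClosed {z : E | ε ≤ f |z|} :=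
    isClosed_le continuous_const (f.continuous.comp (continuous_id.sup continuous_neg))
  have hzero : ε ≤ f |(0 : E)| :=
    hclosed.closure_subset_iff.2
      (fun _ hz => (hx.comp_strictMono hφ).le_apply_abs_of_mem_convexHull f hφε hz)
      (hw.comp_strictMono hφ).zero_mem_closure_convexHull
  rw [abs_zero, map_zero] at hzero
  exact hε.not_ge hzero

theorem weaklyNull_abs (hx : DisjointSeq x) (hw : WeaklyNull x) : WeaklyNull fun n => |x n| := by
  intro f
  refine tendsto_order.2 ⟨fun a ha => ?_, fun a ha => ?_⟩
  · filter_upwards [not_frequently.1 (hx.not_frequently_le_apply_abs hw (-f) (neg_pos.2 ha))]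
      with n hn
    simpa [neg_le_neg_iff] using hn
  · filter_upwards [not_frequently.1 (hx.not_frequently_le_apply_abs hw f ha)] with n hn
    exact not_le.1 hn

end DisjointSeq

theorem ContinuousMultilinearMap.tendsto_norm_apply_of_tendsto_norm_zero {𝕜 ι α G : Type*}
    {E : ι → Type*} [NontriviallyNormedField 𝕜] [∀ i, NormedAddCommGroup (E i)]
    [∀ i, NormedSpace 𝕜 (E i)] [NormedAddCommGroup G] [NormedSpace 𝕜 G] [Fintype ι]
    [DecidableEq ι] (A : ContinuousMultilinearMap 𝕜 E G) {l : Filter α} {x : ∀ i, α → E i}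
    (j : ι) (hj : Tendsto (fun a => ‖x j a‖) l (𝓝 0)) (hbdd : ∀ i, ∃ C, ∀ a, ‖x i a‖ ≤ C) :
    Tendsto (fun a => ‖A (fun i => x i a)‖) l (𝓝 0) := by
  choose C hC using hbdd
  have hle : ∀ a, ‖A (fun i => x i a)‖ ≤ ‖A‖ * (∏ i ∈ Finset.univ \ {j}, C i) * ‖x j a‖ := by
    intro a
    calc ‖A (fun i => x i a)‖ ≤ ‖A‖ * ∏ i, Function.update C j ‖x j a‖ i := by
          refine A.le_opNorm_mul_prod_of_le fun i => ?_
          rcases eq_or_ne i j with rfl | hij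
          · simp
          · simpa [hij] using hC i a
      _ = ‖A‖ * (∏ i ∈ Finset.univ \ {j}, C i) * ‖x j a‖ := by
          rw [Finset.prod_update_of_mem (Finset.mem_univ j)]; ring
  refine squeeze_zero (fun a => norm_nonneg _) hle ?_
  simpa using hj.const_mul (‖A‖ * ∏ i ∈ Finset.univ \ {j}, C i)

theorem almostDunfordPettis_of_positiveSchurProperty_general
    {m : ℕ} {E : Fin m → Type*} [∀ i, NormedAddCommGroup (E i)] [∀ i, Lattice (E i)]
    [∀ i, HasSolidNorm (E i)] [∀ i, IsOrderedAddMonoid (E i)]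
    [∀ i, NormedSpace ℝ (E i)]
    {G : Type*} [NormedAddCommGroup G] [NormedSpace ℝ G]
    (j : Fin m) (hj : PositiveSchurProperty (E j))
    (A : ContinuousMultilinearMap ℝ E G)
    (x : ∀ i, ℕ → E i) (hdisj : ∀ i, DisjointSeq (x i)) (hweak : ∀ i, WeaklyNull (x i)) :
    Tendsto (fun n => ‖A (fun i => x i n)‖) atTop (𝓝 0) := by
  have hnull : Tendsto (fun n => ‖x j n‖) atTop (𝓝 0) := by
    simpa only [norm_abs_eq_norm] using
      hj _ (fun n => abs_nonneg _) ((hdisj j).weaklyNull_abs (hweak j))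
  exact A.tendsto_norm_apply_of_tendsto_norm_zero j hnull fun i => (hweak i).exists_norm_le

/-- If some `E j` has the positive Schur property, then every continuous `m`-linear operator
`A : E 1 × ⋯ × E m → G` is almost Dunford–Pettis. -/
theorem almostDunfordPettis_of_positiveSchurProperty
    {m : ℕ} {E : Fin m → Type*} [∀ i, NormedAddCommGroup (E i)] [∀ i, Lattice (E i)]
    [∀ i, HasSolidNorm (E i)] [∀ i, IsOrderedAddMonoid (E i)]
    [∀ i, NormedSpace ℝ (E i)] [∀ i, CompleteSpace (E i)]
    {G : Type*} [NormedAddCommGroup G] [NormedSpace ℝ G] [CompleteSpace G]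
    (j : Fin m) (hj : PositiveSchurProperty (E j))
    (A : ContinuousMultilinearMap ℝ E G)
    (x : ∀ i, ℕ → E i) (hdisj : ∀ i, DisjointSeq (x i)) (hweak : ∀ i, WeaklyNull (x i)) :
    Tendsto (fun n => ‖A (fun i => x i n)‖) atTop (𝓝 0) :=
  almostDunfordPettis_of_positiveSchurProperty_general j hj A x hdisj hweak
end

section
/- Consider the continuous bilinear form B : ℓ_1 × ℓ_∞ → ℝ, B(x,y) = ∑_n x_n y_n. Then: (i) B is almost Dunford–Pettis; (ii) B is not weakly positively limited when ℓ_1 and ℓ_∞ are regarded as the duals of c_0 and of ℓ_1 respectively; more precisely, the canonical unit vectors (e_n) form a sequence of positive elements of ℓ_1 such that ∑_i a_i (e_n)_i → 0 as n → ∞ for every a ∈ c_0 (weak*-null with respect to c_0), the vectors y_n = e_1 + ⋯ + e_n form a sequence of positive elements of ℓ_∞ with ‖y_n‖_∞ = 1 for all n, and yet B(e_n, y_n) = 1 for every n. -/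
open Filter Topology
open scoped ENNReal

set_option synthInstance.maxHeartbeats 1000000
set_option maxHeartbeats 2000000

noncomputable section

instance : Fact ((1 : ℝ≥0∞) ≤ 1) := ⟨le_rfl⟩
instance : Fact ((1 : ℝ≥0∞) ≤ ∞) := ⟨le_top⟩

/-- A sequence is weakly null if `f (x n) → 0` for every continuous linear functional `f`. -/
def WeaklyNullLp {p : ℝ≥0∞} [Fact (1 ≤ p)] (x : ℕ → lp (fun _ : ℕ => ℝ) p) : Prop :=
  ∀ f : lp (fun _ : ℕ => ℝ) p →L[ℝ] ℝ, Tendsto (fun n => f (x n)) atTop (𝓝 0)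

/-- A sequence in `ℓ_p` is disjoint (for the coordinatewise order) if for `n ≠ k` the
coordinatewise infimum of `|x n|` and `|x k|` vanishes. -/
def DisjointSeqLp {p : ℝ≥0∞} (x : ℕ → lp (fun _ : ℕ => ℝ) p) : Prop :=
  ∀ n k, n ≠ k → ∀ i, min |x n i| |x k i| = 0

/-- The `n`-th canonical unit vector of `ℓ_p`. -/
def unitVec (p : ℝ≥0∞) (n : ℕ) : lp (fun _ : ℕ => ℝ) p := lp.single p n 1

/-- The element `e 0 + ⋯ + e n` of `ℓ_∞`. -/
def sumVec (n : ℕ) : lp (fun _ : ℕ => ℝ) ∞ := ∑ i ∈ Finset.range (n + 1), lp.single ∞ i 1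


private lemma lp_one_summable (z : lp (fun _ : ℕ => ℝ) 1) : Summable fun i => ‖z i‖ := by
  have := (lp.memℓp z).summable (p := 1) (by norm_num)
  simpa using this

private lemma lp_one_norm (z : lp (fun _ : ℕ => ℝ) 1) : ‖z‖ = ∑' i, ‖z i‖ := by
  rw [lp.norm_eq_tsum_rpow (by norm_num) z]
  simp

private lemma summable_eps (ε : ℕ → ℝ) (hε : ∀ i, |ε i| ≤ 1) (z : lp (fun _ : ℕ => ℝ) 1) :
    Summable fun i => ε i * z i := by
  refine Summable.of_norm_bounded (lp_one_summable z) fun i => ?_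
  rw [norm_mul]
  calc ‖ε i‖ * ‖z i‖ ≤ 1 * ‖z i‖ := by
        apply mul_le_mul_of_nonneg_right (hε i) (norm_nonneg _)
    _ = ‖z i‖ := one_mul _

/-- The continuous linear functional on `ℓ_1` induced by a sequence bounded by `1`. -/
private def dualFunc (ε : ℕ → ℝ) (hε : ∀ i, |ε i| ≤ 1) : lp (fun _ : ℕ => ℝ) 1 →L[ℝ] ℝ :=
  LinearMap.mkContinuous
    { toFun := fun z => ∑' i, ε i * z i
      map_add' := by
        intro z w
        have hz := summable_eps ε hε z
        have hw := summable_eps ε hε w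
        have : ∀ i, ε i * (z + w) i = ε i * z i + ε i * w i := by
          intro i
          rw [lp.coeFn_add]
          simp [mul_add]
        simp only [this]
        exact Summable.tsum_add hz hw
      map_smul' := by
        intro c z
        have : ∀ i, ε i * (c • z) i = c * (ε i * z i) := by
          intro i
          rw [lp.coeFn_smul]
          simp [smul_eq_mul]; ring
        simp only [this]
        rw [tsum_mul_left]
        rfl } 1
    (by
      intro z
      have hs := summable_eps ε hε z
      calc ‖∑' i, ε i * z i‖ ≤ ∑' i, ‖ε i * z i‖ := norm_tsum_le_tsum_norm hs.norm
        _ ≤ ∑' i, ‖z i‖ := by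
            refine Summable.tsum_le_tsum (fun i => ?_) hs.norm (lp_one_summable z)
            rw [norm_mul]
            calc ‖ε i‖ * ‖z i‖ ≤ 1 * ‖z i‖ :=
                  mul_le_mul_of_nonneg_right (hε i) (norm_nonneg _)
              _ = ‖z i‖ := one_mul _
        _ = ‖z‖ := (lp_one_norm z).symm
        _ = 1 * ‖z‖ := (one_mul _).symm)

private lemma dualFunc_apply (ε : ℕ → ℝ) (hε : ∀ i, |ε i| ≤ 1) (z : lp (fun _ : ℕ => ℝ) 1) :
    dualFunc ε hε z = ∑' i, ε i * z i := rfl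

/-- Schur-type property: a disjoint weakly null sequence in `ℓ_1` is norm null. -/
private lemma disjoint_weaklyNull_norm_tendsto (x : ℕ → lp (fun _ : ℕ => ℝ) 1)
    (hd : DisjointSeqLp x) (hw : WeaklyNullLp x) :
    Tendsto (fun n => ‖x n‖) atTop (𝓝 0) := by
  classical
  set ε : ℕ → ℝ := fun i =>
    if h : ∃ n, x n i ≠ 0 then |x h.choose i| / x h.choose i else 0 with hεdef
  have hε : ∀ i, |ε i| ≤ 1 := by
    intro i
    by_cases h : ∃ n, x n i ≠ 0
    · simp only [hεdef, dif_pos h]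
      rw [abs_div, abs_abs, div_self (abs_ne_zero.2 h.choose_spec)]
    · simp only [hεdef, dif_neg h]; simp
  have key : ∀ n i, ε i * x n i = |x n i| := by
    intro n i
    by_cases hni : x n i = 0
    · simp [hni]
    · have h : ∃ m, x m i ≠ 0 := ⟨n, hni⟩
      have hm : x h.choose i ≠ 0 := h.choose_spec
      have hmn : h.choose = n := by
        by_contra hne
        have := hd h.choose n hne i
        have h1 : 0 < |x h.choose i| := abs_pos.2 hm
        have h2 : 0 < |x n i| := abs_pos.2 hni
        have hlt := lt_min h1 h2
        rw [this] at hlt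
        exact lt_irrefl 0 hlt
      simp only [hεdef, dif_pos h, hmn]
      exact div_mul_cancel₀ _ hni
  have h0 := hw (dualFunc ε hε)
  have heq : ∀ n, dualFunc ε hε (x n) = ‖x n‖ := by
    intro n
    rw [dualFunc_apply, lp_one_norm]
    congr 1
    ext i
    rw [key n i, Real.norm_eq_abs]
  simpa only [heq] using h0

private lemma exists_bound_of_tendsto (u : ℕ → ℝ) (h : Tendsto u atTop (𝓝 0)) :
    ∃ C, ∀ n, ‖u n‖ ≤ C := by
  have := NormedAddCommGroup.tendsto_nhds_zero.mp h 1 one_pos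
  rw [eventually_atTop] at this
  obtain ⟨N, hN⟩ := this
  refine ⟨1 + ∑ k ∈ Finset.range N, ‖u k‖, fun n => ?_⟩
  rcases le_or_gt N n with hn | hn
  · have h1 : ‖u n‖ < 1 := hN n hn
    have h2 : (0:ℝ) ≤ ∑ k ∈ Finset.range N, ‖u k‖ :=
      Finset.sum_nonneg fun _ _ => norm_nonneg _
    linarith
  · have h1 : ‖u n‖ ≤ ∑ k ∈ Finset.range N, ‖u k‖ :=
      Finset.single_le_sum (fun _ _ => norm_nonneg _) (Finset.mem_range.2 hn)
    linarith

/-- A weakly null sequence in `ℓ_∞` is norm bounded. -/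
private lemma weaklyNull_bounded (y : ℕ → lp (fun _ : ℕ => ℝ) ∞) (hw : WeaklyNullLp y) :
    ∃ C, 0 ≤ C ∧ ∀ n, ‖y n‖ ≤ C := by
  set g : ℕ → StrongDual ℝ (lp (fun _ : ℕ => ℝ) ∞) →L[ℝ] ℝ :=
    fun n => NormedSpace.inclusionInDoubleDual ℝ _ (y n) with hg
  have hpt : ∀ f : StrongDual ℝ (lp (fun _ : ℕ => ℝ) ∞), ∃ C, ∀ n, ‖g n f‖ ≤ C := by
    intro f
    have : Tendsto (fun n => f (y n)) atTop (𝓝 0) := hw f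
    obtain ⟨C, hC⟩ := exists_bound_of_tendsto _ this
    exact ⟨C, fun n => by simpa [hg, NormedSpace.dual_def] using hC n⟩
  obtain ⟨C', hC'⟩ := banach_steinhaus hpt
  have hnorm : ∀ n, ‖y n‖ = ‖g n‖ := fun n =>
    ((NormedSpace.inclusionInDoubleDualLi ℝ (E := lp (fun _ : ℕ => ℝ) ∞)).norm_map (y n)).symm
  refine ⟨max C' 0, le_max_right _ _, fun n => ?_⟩
  rw [hnorm n]
  exact le_trans (hC' n) (le_max_left _ _)

private lemma sumVec_apply (n i : ℕ) :
    sumVec n i = if i ∈ Finset.range (n + 1) then (1:ℝ) else 0 := by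
  rw [sumVec, lp.coeFn_sum, Finset.sum_apply]
  rw [← Finset.sum_ite_eq (Finset.range (n + 1)) i (fun _ => (1:ℝ))]
  refine Finset.sum_congr rfl fun k _ => ?_
  by_cases hik : i = k
  · subst hik; simp [lp.single_apply_self]
  · rw [lp.single_apply_ne _ _ _ hik, if_neg hik]

private lemma unitVec_apply (n i : ℕ) :
    unitVec 1 n i = if i = n then (1:ℝ) else 0 := by
  by_cases h : i = n
  · subst h; simp [unitVec, lp.single_apply_self]
  · rw [unitVec, lp.single_apply_ne _ _ _ h, if_neg h]

/-- The duality bilinear form `B(x, y) = ∑ₙ xₙ yₙ` on `ℓ_1 × ℓ_∞` is almost Dunford–Pettis,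
but it is not weakly positively limited when `ℓ_1` and `ℓ_∞` are regarded as the duals of
`c_0` and of `ℓ_1` respectively: the canonical unit vectors `(eₙ)` of `ℓ_1` are positive and
weak*-null with respect to `c_0`, the vectors `yₙ = e 0 + ⋯ + e n` are positive in `ℓ_∞` with
`‖yₙ‖ = 1`, and yet `B(eₙ, yₙ) = 1` for every `n`. -/
theorem duality_form_ell1_ellInfty_almostDP_not_weaklyPositivelyLimited :
    -- (i) `B` is almost Dunford–Pettis
    (∀ (x : ℕ → lp (fun _ : ℕ => ℝ) 1) (y : ℕ → lp (fun _ : ℕ => ℝ) ∞),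
        DisjointSeqLp x → WeaklyNullLp x → DisjointSeqLp y → WeaklyNullLp y →
        Tendsto (fun n => ∑' i, x n i * y n i) atTop (𝓝 0)) ∧
    -- (ii) the witnesses: `(eₙ)` is positive and weak*-null with respect to `c_0`
    (∀ n i, 0 ≤ unitVec 1 n i) ∧
    (∀ a : ℕ → ℝ, Tendsto a atTop (𝓝 0) →
        Tendsto (fun n => ∑' i, a i * unitVec 1 n i) atTop (𝓝 0)) ∧
    -- `(yₙ)` is positive and of norm one in `ℓ_∞`
    (∀ n i, 0 ≤ sumVec n i) ∧ (∀ n, ‖sumVec n‖ = 1) ∧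
    -- `B(eₙ, yₙ) = 1`
    (∀ n, (∑' i, unitVec 1 n i * sumVec n i) = 1) ∧
    -- hence `B` is not weakly positively limited
    ¬ (∀ (x : ℕ → lp (fun _ : ℕ => ℝ) 1) (y : ℕ → lp (fun _ : ℕ => ℝ) ∞),
        (∀ n i, 0 ≤ x n i) →
        (∀ a : ℕ → ℝ, Tendsto a atTop (𝓝 0) →
          Tendsto (fun n => ∑' i, a i * x n i) atTop (𝓝 0)) →
        (∀ n i, 0 ≤ y n i) → (∃ C, ∀ n, ‖y n‖ ≤ C) →
        Tendsto (fun n => ∑' i, x n i * y n i) atTop (𝓝 0)) := by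
  have hBval : ∀ n, (∑' i, unitVec 1 n i * sumVec n i) = 1 := by
    intro n
    rw [tsum_eq_single n]
    · rw [unitVec_apply, sumVec_apply]
      simp [Nat.lt_succ_iff]
    · intro b hb
      rw [unitVec_apply, if_neg hb, zero_mul]
  have hwstar : ∀ a : ℕ → ℝ, Tendsto a atTop (𝓝 0) →
      Tendsto (fun n => ∑' i, a i * unitVec 1 n i) atTop (𝓝 0) := by
    intro a ha
    have : ∀ n, (∑' i, a i * unitVec 1 n i) = a n := by
      intro n
      rw [tsum_eq_single n]
      · rw [unitVec_apply, if_pos rfl, mul_one]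
      · intro b hb
        rw [unitVec_apply, if_neg hb, mul_zero]
    simpa only [this] using ha
  have hsumnorm : ∀ n, ‖sumVec n‖ = 1 := by
    intro n
    apply le_antisymm
    · apply (lp.isLUB_norm (sumVec n)).2
      rintro r ⟨i, rfl⟩
      simp only [sumVec_apply]
      split <;> simp
    · have := (lp.isLUB_norm (sumVec n)).1 ⟨0, rfl⟩
      simp only [sumVec_apply] at this
      simpa using this
  refine ⟨?_, ?_, hwstar, ?_, hsumnorm, hBval, ?_⟩
  · -- (i) almost Dunford–Pettis
    intro x y hdx hwx hdy hwy
    obtain ⟨C, hC0, hC⟩ := weaklyNull_bounded y hwy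
    have hx := disjoint_weaklyNull_norm_tendsto x hdx hwx
    apply squeeze_zero_norm (a := fun n => ‖x n‖ * C)
    · intro n
      have hsum : Summable fun i => ‖x n i‖ := lp_one_summable _
      have hsumC : Summable fun i => ‖x n i‖ * C := hsum.mul_right C
      have hbd : ∀ i, ‖x n i * y n i‖ ≤ ‖x n i‖ * C := by
        intro i
        rw [norm_mul]
        apply mul_le_mul_of_nonneg_left _ (norm_nonneg _)
        exact le_trans (lp.norm_apply_le_norm (by simp) (y n) i) (hC n)
      have hsum2 : Summable fun i => ‖x n i * y n i‖ :=
        Summable.of_nonneg_of_le (fun _ => norm_nonneg _) hbd hsumC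
      calc ‖∑' i, x n i * y n i‖ ≤ ∑' i, ‖x n i * y n i‖ := norm_tsum_le_tsum_norm hsum2
        _ ≤ ∑' i, ‖x n i‖ * C := Summable.tsum_le_tsum hbd hsum2 hsumC
        _ = (∑' i, ‖x n i‖) * C := tsum_mul_right
        _ = ‖x n‖ * C := by rw [lp_one_norm]
    · simpa using hx.mul_const C
  · intro n i
    rw [unitVec_apply]
    split <;> norm_num
  · intro n i
    rw [sumVec_apply]
    split <;> norm_num
  · -- not weakly positively limited
    intro h
    have hpos : ∀ n i, 0 ≤ unitVec 1 n i := by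
      intro n i; rw [unitVec_apply]; split <;> norm_num
    have hposy : ∀ n i, 0 ≤ sumVec n i := by
      intro n i; rw [sumVec_apply]; split <;> norm_num
    have hten := h (unitVec 1) sumVec hpos hwstar hposy ⟨1, fun n => le_of_eq (hsumnorm n)⟩
    have heq : (fun n => ∑' i, unitVec 1 n i * sumVec n i) = fun _ => (1:ℝ) := funext hBval
    rw [heq] at hten
    exact one_ne_zero (tendsto_nhds_unique tendsto_const_nhds hten)

end
end

section
/- Let m ∈ ℕ, let E_1, …, E_m, G be Banach spaces and let A : E_1 × ⋯ × E_m → G be a continuous m-linear operator of finite rank, i.e., the linear span of the range of A is finite-dimensional. Then the Arens extension A*[m+1] : E_1** × ⋯ × E_m** → G** is of finite rank as well; in fact, the range of A*[m+1] is contained in the image under the canonical embedding J_G : G → G** of the linear span of the range of A. -/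
universe u v

noncomputable section

open Filter Topology NormedSpace

/-- The iterated Arens extension of a continuous multilinear form, for a fixed tuple of
elements of the biduals, as a continuous linear functional on the space of continuous
multilinear forms:  `A ↦ x 1 (z 1 ↦ x 2 (z 2 ↦ ⋯ ↦ x m (z m ↦ A (z 1, …, z m)) ⋯ ))`. -/
def arensFunctional : ∀ (m : ℕ) (E : Fin m → Type u) [∀ i, NormedAddCommGroup (E i)]
    [∀ i, NormedSpace ℝ (E i)]
    (_ : ∀ i, StrongDual ℝ (StrongDual ℝ (E i))), ContinuousMultilinearMap ℝ E ℝ →L[ℝ] ℝ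
  | 0, E, _, _, _ => ContinuousMultilinearMap.apply ℝ E ℝ (fun i => i.elim0)
  | (m + 1), E, _, _, x =>
      (arensFunctional m (fun i => E i.castSucc) (fun i => x i.castSucc)).comp
        ((ContinuousLinearMap.compContinuousMultilinearMapL ℝ
            (fun i : Fin m => E i.castSucc) (E (Fin.last m) →L[ℝ] ℝ) ℝ
            (x (Fin.last m))).comp
          (continuousMultilinearCurryRightEquiv ℝ E
            ℝ).toLinearIsometry.toContinuousLinearMap)

/-- The Arens extension `A*[m+1]` of a continuous multilinear form `A`, given by the
iterated formula `A*[m+1] (x 1, …, x m) = x 1 (z 1 ↦ x 2 (z 2 ↦ ⋯ ↦ x m (z m ↦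
A (z 1, …, z m)) ⋯ ))`. -/
def arensExt {m : ℕ} {E : Fin m → Type u} [∀ i, NormedAddCommGroup (E i)]
    [∀ i, NormedSpace ℝ (E i)] (A : ContinuousMultilinearMap ℝ E ℝ)
    (x : ∀ i, StrongDual ℝ (StrongDual ℝ (E i))) : ℝ :=
  arensFunctional m E x A

/-- The Arens extension `A*[m+1]` of a vector valued continuous multilinear operator `A`,
defined by `A*[m+1] (x 1, …, x m) (y*) = (y* ∘ A)*[m+1] (x 1, …, x m)`. -/
def arensExtVec {m : ℕ} {E : Fin m → Type u} [∀ i, NormedAddCommGroup (E i)]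
    [∀ i, NormedSpace ℝ (E i)] {F : Type v} [NormedAddCommGroup F] [NormedSpace ℝ F]
    (A : ContinuousMultilinearMap ℝ E F) (x : ∀ i, StrongDual ℝ (StrongDual ℝ (E i))) :
    StrongDual ℝ (StrongDual ℝ F) :=
  (arensFunctional m E x).comp
    ((ContinuousLinearMap.compContinuousMultilinearMapL ℝ E F ℝ).flip A)

/-- The defining property: `A*[m+1] (x…) (y*) = (y* ∘ A)*[m+1] (x…)`. -/
theorem arensExtVec_apply {m : ℕ} {E : Fin m → Type u} [∀ i, NormedAddCommGroup (E i)]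
    [∀ i, NormedSpace ℝ (E i)] {F : Type v} [NormedAddCommGroup F] [NormedSpace ℝ F]
    (A : ContinuousMultilinearMap ℝ E F) (x : ∀ i, StrongDual ℝ (StrongDual ℝ (E i))) (f : StrongDual ℝ F) :
    arensExtVec A x f = arensExt (f.compContinuousMultilinearMap A) x := rfl

/-- The Arens extension of a finite rank continuous multilinear operator is of finite rank;
in fact its range is contained in the image under the canonical embedding `J_G` of the span
of the range of `A`. -/
theorem arensExtVec_finiteRank {m : ℕ} {E : Fin m → Type u} [∀ i, NormedAddCommGroup (E i)]
    [∀ i, NormedSpace ℝ (E i)] [∀ i, CompleteSpace (E i)]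
    {G : Type v} [NormedAddCommGroup G] [NormedSpace ℝ G] [CompleteSpace G]
    (A : ContinuousMultilinearMap ℝ E G)
    (hA : FiniteDimensional ℝ (Submodule.span ℝ (Set.range fun z : ∀ i, E i => A z))) :
    @FiniteDimensional ℝ (Submodule.span ℝ
        (Set.range fun x : ∀ i, StrongDual ℝ (StrongDual ℝ (E i)) => arensExtVec A x)) _
        (Submodule.addCommGroup (Submodule.span ℝ
          (Set.range fun x : ∀ i, StrongDual ℝ (StrongDual ℝ (E i)) => arensExtVec A x))) _ ∧
      ∀ x : ∀ i, StrongDual ℝ (StrongDual ℝ (E i)),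
        arensExtVec A x ∈
          inclusionInDoubleDual ℝ G ''
            (Submodule.span ℝ (Set.range fun z : ∀ i, E i => A z) : Set G) := by

  classical
  set S : Submodule ℝ G := Submodule.span ℝ (Set.range fun z : ∀ i, E i => A z) with hS
  haveI : FiniteDimensional ℝ S := hA
  set n := Module.finrank ℝ S with hn
  let b : Module.Basis (Fin n) ℝ S := Module.finBasis ℝ S
  have hf : ∀ j : Fin n, ∃ f : StrongDual ℝ G, ∀ s : S, f s = b.repr s j := by
    intro j
    obtain ⟨f, hf, -⟩ := exists_extension_norm_eq (S : Subspace ℝ G)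
      (LinearMap.toContinuousLinearMap (b.coord j))
    exact ⟨f, fun s => by simpa [Module.Basis.coord_apply] using hf s⟩
  choose f hfc using hf
  have hmem : ∀ z : ∀ i, E i, A z ∈ S := fun z => Submodule.subset_span ⟨z, rfl⟩
  have key : ∀ x : ∀ i, StrongDual ℝ (StrongDual ℝ (E i)),
      arensExtVec A x = inclusionInDoubleDual ℝ G
        (∑ j, arensExtVec A x (f j) • (b j : G)) := by
    intro x
    ext φ
    have hdecomp : φ.compContinuousMultilinearMap A
        = ∑ j, φ (b j : G) • ((f j).compContinuousMultilinearMap A) := by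
      ext z
      have hfz : ∀ j, f j (A z) = b.repr ⟨A z, hmem z⟩ j := fun j => hfc j ⟨A z, hmem z⟩
      have h2 : A z = ∑ j, b.repr ⟨A z, hmem z⟩ j • (b j : G) := by
        calc A z = ((⟨A z, hmem z⟩ : S) : G) := rfl
          _ = ((∑ j, b.repr ⟨A z, hmem z⟩ j • b j : S) : G) := by rw [b.sum_repr]
          _ = _ := by push_cast; rfl
      simp only [ContinuousMultilinearMap.sum_apply, ContinuousMultilinearMap.smul_apply,
        ContinuousLinearMap.compContinuousMultilinearMap_coe, Function.comp_apply,
        smul_eq_mul]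
      simp only [hfz]
      conv_lhs => rw [h2, map_sum]
      simp only [map_smul, smul_eq_mul]
      exact Finset.sum_congr rfl fun j _ => mul_comm _ _
    have hlhs : arensExtVec A x φ = ∑ j, φ (b j : G) * arensExtVec A x (f j) := by
      rw [arensExtVec_apply, arensExt, hdecomp, map_sum]
      exact Finset.sum_congr rfl fun j _ => by
        rw [map_smul]; rfl
    rw [hlhs]
    rw [map_sum, ContinuousLinearMap.sum_apply]
    refine Finset.sum_congr rfl fun j _ => ?_
    rw [map_smul, ContinuousLinearMap.smul_apply, dual_def, smul_eq_mul, mul_comm]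
  have hbS : ∀ j : Fin n, (b j : G) ∈ S := fun j => (b j).2
  have hsum : ∀ x : ∀ i, StrongDual ℝ (StrongDual ℝ (E i)),
      (∑ j, arensExtVec A x (f j) • (b j : G)) ∈ S :=
    fun x => Submodule.sum_mem _ fun j _ => Submodule.smul_mem _ _ (hbS j)
  constructor
  · haveI hmap : FiniteDimensional ℝ
        (Submodule.map (inclusionInDoubleDual ℝ G).toLinearMap S) :=
      Module.Finite.map S _
    refine Submodule.finiteDimensional_of_le
      (S₂ := Submodule.map (inclusionInDoubleDual ℝ G).toLinearMap S)
      (Submodule.span_le.2 ?_)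
    rintro _ ⟨x, rfl⟩
    exact ⟨_, hsum x, (key x).symm⟩
  · intro x
    exact ⟨_, hsum x, (key x).symm⟩


end
end

section
/- Let E_1, E_2 be Banach lattices such that every norm-bounded disjoint sequence of positive elements of E_2 is weakly null (equivalently, the norm of E_2* is order continuous). If A : E_1 × E_2 → ℝ is a positive almost Dunford–Pettis continuous bilinear form, then the bounded linear operator T : E_1 → E_2* defined by T(x) = A(x, ·) is almost Dunford–Pettis, i.e., ‖T(x_n)‖_{E_2*} → 0 for every disjoint weakly null sequence (x_n) in E_1. -/
noncomputable section

open Filter Topology NormedSpace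

section Aux
variable {E : Type*} [NormedAddCommGroup E] [Lattice E] [HasSolidNorm E] [IsOrderedAddMonoid E]
  [NormedSpace ℝ E]

omit [NormedSpace ℝ E] in
lemma aux_inf_add {p q r : E} (hp : 0 ≤ p) (hq : 0 ≤ q) (hr : 0 ≤ r) :
    p ⊓ (q + r) ≤ p ⊓ q + p ⊓ r := by
  have h1 : p ⊓ q + p ⊓ r = ((p + p) ⊓ (q + p)) ⊓ ((p + r) ⊓ (q + r)) := by
    rw [add_inf p r (p ⊓ q), inf_add p q p, inf_add p q r]
  rw [h1]
  refine le_inf (le_inf ?_ ?_) (le_inf ?_ ?_)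
  · exact le_trans inf_le_left (le_add_of_nonneg_right hp)
  · exact le_trans inf_le_left (le_add_of_nonneg_left hq)
  · exact le_trans inf_le_left (le_add_of_nonneg_right hr)
  · exact inf_le_right

omit [NormedSpace ℝ E] in
lemma aux_pow2_semiclosed (m : ℕ) {w : E} (h : 0 ≤ (2 ^ m) • w) : 0 ≤ w := by
  induction m with
  | zero => simpa using h
  | succ n ih =>
    refine ih (nsmul_two_semiclosed ?_)
    rwa [← mul_nsmul', ← pow_succ']

lemma aux_smul_nonneg {c : ℝ} (hc : 0 ≤ c) {v : E} (hv : 0 ≤ v) : 0 ≤ c • v := by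
  have hdyad : ∀ (kk m : ℕ), 0 ≤ ((kk : ℝ) / 2 ^ m) • v := by
    intro kk m
    refine aux_pow2_semiclosed m ?_
    have : (2 ^ m) • (((kk : ℝ) / 2 ^ m) • v) = kk • v := by
      rw [← Nat.cast_smul_eq_nsmul ℝ (2 ^ m), smul_smul, ← Nat.cast_smul_eq_nsmul ℝ kk]
      congr 1
      push_cast
      field_simp
    rw [this]
    exact nsmul_nonneg hv kk
  have hseq : Tendsto (fun m : ℕ => ((⌈c * 2 ^ m⌉₊ : ℝ) / 2 ^ m) • v) atTop (𝓝 (c • v)) := by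
    have h1 : Tendsto (fun m : ℕ => ((⌈c * 2 ^ m⌉₊ : ℝ) / 2 ^ m)) atTop (𝓝 c) := by
      have hle : ∀ m : ℕ, c ≤ (⌈c * 2 ^ m⌉₊ : ℝ) / 2 ^ m := by
        intro m
        rw [le_div_iff₀ (by positivity)]
        exact Nat.le_ceil _
      have hlt : ∀ m : ℕ, (⌈c * 2 ^ m⌉₊ : ℝ) / 2 ^ m ≤ c + (1 / 2) ^ m := by
        intro m
        rw [div_le_iff₀ (by positivity)]
        have := (Nat.ceil_lt_add_one (by positivity : (0:ℝ) ≤ c * 2 ^ m)).le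
        refine this.trans ?_
        rw [add_mul]
        gcongr
        rw [div_pow, one_pow, one_div, inv_mul_cancel₀ (by positivity)]
      refine tendsto_of_tendsto_of_tendsto_of_le_of_le (g := fun _ : ℕ => c)
        (h := fun m : ℕ => c + (1 / 2) ^ m) tendsto_const_nhds ?_ hle hlt
      have : Tendsto (fun m : ℕ => (1 / 2 : ℝ) ^ m) atTop (𝓝 0) :=
        tendsto_pow_atTop_nhds_zero_of_lt_one (by norm_num) (by norm_num)
      simpa using tendsto_const_nhds.add this
    exact h1.smul_const v
  refine le_of_tendsto_of_tendsto' tendsto_const_nhds hseq (fun m => hdyad _ m)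

lemma aux_smul_mono {c : ℝ} (hc : 0 ≤ c) {a b : E} (h : a ≤ b) : c • a ≤ c • b := by
  rw [← sub_nonneg, ← smul_sub]
  exact aux_smul_nonneg hc (sub_nonneg.mpr h)

lemma aux_smul_inf {c : ℝ} (hc : 0 ≤ c) (a b : E) : c • (a ⊓ b) = (c • a) ⊓ (c • b) := by
  rcases eq_or_lt_of_le hc with rfl | hc'
  · simp
  refine le_antisymm (le_inf (aux_smul_mono hc inf_le_left) (aux_smul_mono hc inf_le_right)) ?_
  have h2 : c⁻¹ • ((c • a) ⊓ (c • b)) ≤ a ⊓ b := by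
    refine le_inf ?_ ?_
    · have := aux_smul_mono (le_of_lt (inv_pos.mpr hc')) (inf_le_left (a := c • a) (b := c • b))
      rwa [smul_smul, inv_mul_cancel₀ hc'.ne', one_smul] at this
    · have := aux_smul_mono (le_of_lt (inv_pos.mpr hc')) (inf_le_right (a := c • a) (b := c • b))
      rwa [smul_smul, inv_mul_cancel₀ hc'.ne', one_smul] at this
  have := aux_smul_mono hc h2
  rwa [smul_smul, mul_inv_cancel₀ hc'.ne', one_smul] at this

lemma aux_smul_sup {c : ℝ} (hc : 0 ≤ c) (a b : E) : c • (a ⊔ b) = (c • a) ⊔ (c • b) := by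
  rcases eq_or_lt_of_le hc with rfl | hc'
  · simp
  refine le_antisymm ?_ (sup_le (aux_smul_mono hc le_sup_left) (aux_smul_mono hc le_sup_right))
  have h2 : a ⊔ b ≤ c⁻¹ • ((c • a) ⊔ (c • b)) := by
    refine sup_le ?_ ?_
    · have := aux_smul_mono (le_of_lt (inv_pos.mpr hc')) (le_sup_left (a := c • a) (b := c • b))
      rwa [smul_smul, inv_mul_cancel₀ hc'.ne', one_smul] at this
    · have := aux_smul_mono (le_of_lt (inv_pos.mpr hc')) (le_sup_right (a := c • a) (b := c • b))
      rwa [smul_smul, inv_mul_cancel₀ hc'.ne', one_smul] at this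
  have := aux_smul_mono hc h2
  rwa [smul_smul, mul_inv_cancel₀ hc'.ne', one_smul] at this

lemma aux_smul_posPart {c : ℝ} (hc : 0 ≤ c) (a : E) : (c • a)⁺ = c • a⁺ := by
  rw [posPart_def, posPart_def, aux_smul_sup hc, smul_zero]

lemma aux_abs_smul {c : ℝ} (hc : 0 ≤ c) (a : E) : |c • a| = c • |a| := by
  have habs : ∀ x : E, |x| = x ⊔ -x := fun x => rfl
  rw [habs, habs, aux_smul_sup hc, smul_neg]

end Aux

section Aux2
variable {E : Type*} [NormedAddCommGroup E] [Lattice E] [HasSolidNorm E] [IsOrderedAddMonoid E]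
  [NormedSpace ℝ E]

omit [NormedSpace ℝ E] in
lemma aux_posPart_inf (x y : E) : x⁺ ⊓ y⁺ = (x ⊓ y)⁺ := by
  letI : DistribLattice E := AddCommGroup.toDistribLattice E
  rw [posPart_def, posPart_def, posPart_def, sup_inf_right]

/-- Key disjointness lemma. -/
lemma aux_key {a b : E} (ha : 0 ≤ a) (hb : 0 ≤ b) {s t : ℝ} (hs : 0 < s) (ht : 0 < t)
    (hst : 1 ≤ s * t) : (a - s • b)⁺ ⊓ (b - t • a)⁺ = 0 := by
  rw [aux_posPart_inf, posPart_eq_zero]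
  set w := (a - s • b) ⊓ (b - t • a) with hw
  have h1 : t • w ≤ t • a - b := by
    have h2 : t • w ≤ t • (a - s • b) := aux_smul_mono ht.le inf_le_left
    rw [smul_sub, smul_smul] at h2
    refine h2.trans ?_
    have hb' : b ≤ (t * s) • b := by
      have : (0:E) ≤ (t * s - 1) • b :=
        aux_smul_nonneg (by rw [mul_comm] at hst; linarith) hb
      rw [sub_smul, one_smul, sub_nonneg] at this
      exact this
    exact sub_le_sub_left hb' _
  have h2 : w ≤ b - t • a := inf_le_right
  have h3 : (1 + t) • w ≤ 0 := by
    have := add_le_add h1 h2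
    rw [sub_add_sub_cancel', sub_self] at this
    calc (1 + t) • w = t • w + w := by rw [add_smul, one_smul, add_comm]
    _ ≤ 0 := this
  have h4 := aux_smul_mono (le_of_lt (inv_pos.mpr (by linarith : (0:ℝ) < 1 + t))) h3
  rwa [smul_smul, inv_mul_cancel₀ (by linarith : (1:ℝ) + t ≠ 0), one_smul, smul_zero] at h4

omit [NormedSpace ℝ E] in
lemma aux_inf_sum_zero {ι : Type*} (s : Finset ι) {p : E} (hp : 0 ≤ p) {q : ι → E}
    (hq : ∀ i ∈ s, 0 ≤ q i) (h : ∀ i ∈ s, p ⊓ q i = 0) : p ⊓ ∑ i ∈ s, q i = 0 := by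
  classical
  induction s using Finset.induction_on with
  | empty => simp [inf_eq_right.mpr hp]
  | insert a s' hni ih =>
    rw [Finset.sum_insert hni]
    have hsum : 0 ≤ ∑ i ∈ s', q i := Finset.sum_nonneg (fun i hi => hq i (Finset.mem_insert_of_mem hi))
    have h1 := aux_inf_add hp (hq a (Finset.mem_insert_self a s')) hsum
    rw [h a (Finset.mem_insert_self a s'), ih (fun i hi => hq i (Finset.mem_insert_of_mem hi))
      (fun i hi => h i (Finset.mem_insert_of_mem hi)), add_zero] at h1
    exact le_antisymm h1 (le_inf hp (add_nonneg (hq a (Finset.mem_insert_self a s')) hsum))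

omit [NormedSpace ℝ E] in
lemma aux_disj_abs_add {a b : E} (h : |a| ⊓ |b| = 0) : |a + b| = |a| + |b| := by
  have key : ∀ x y : E, |x| ⊓ |y| = 0 → |x| ≤ |x + y| := by
    intro x y hxy
    have h1 : |x| ≤ |x + y| + |y| := by
      calc |x| = |(x + y) + (-y)| := by rw [add_neg_cancel_right]
      _ ≤ |x + y| + |-y| := abs_add_le _ _
      _ = |x + y| + |y| := by rw [abs_neg]
    have h2 : |x| = |x| ⊓ (|x + y| + |y|) := (inf_eq_left.mpr h1).symm
    calc |x| = |x| ⊓ (|x + y| + |y|) := h2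
    _ ≤ |x| ⊓ |x + y| + |x| ⊓ |y| := aux_inf_add (abs_nonneg x) (abs_nonneg _) (abs_nonneg _)
    _ = |x| ⊓ |x + y| := by rw [hxy, add_zero]
    _ ≤ |x + y| := inf_le_right
  refine le_antisymm (abs_add_le a b) ?_
  have hsup : |a| ⊔ |b| ≤ |a + b| := by
    refine sup_le (key a b h) ?_
    have := key b a (by rwa [inf_comm])
    rwa [add_comm] at this
  calc |a| + |b| = |a| ⊓ |b| + (|a| ⊔ |b|) := (inf_add_sup _ _).symm
  _ = |a| ⊔ |b| := by rw [h, zero_add]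
  _ ≤ |a + b| := hsup

omit [NormedSpace ℝ E] in
lemma aux_abs_sum {ι : Type*} (s : Finset ι) (v : ι → E)
    (h : ∀ i ∈ s, ∀ j ∈ s, i ≠ j → |v i| ⊓ |v j| = 0) :
    |∑ i ∈ s, v i| = ∑ i ∈ s, |v i| := by
  classical
  induction s using Finset.induction_on with
  | empty => simp
  | insert a s' hni ih =>
    rw [Finset.sum_insert hni, Finset.sum_insert hni]
    have ih' := ih (fun i hi j hj hij =>
      h i (Finset.mem_insert_of_mem hi) j (Finset.mem_insert_of_mem hj) hij)
    have hdisj : |v a| ⊓ |∑ i ∈ s', v i| = 0 := by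
      rw [ih']
      exact aux_inf_sum_zero s' (abs_nonneg _) (fun i _ => abs_nonneg _)
        (fun i hi => h a (Finset.mem_insert_self a s') i (Finset.mem_insert_of_mem hi)
          (fun hai => hni (hai ▸ hi)))
    rw [aux_disj_abs_add hdisj, ih']

lemma aux_disj_smul {a b : E} (ha : 0 ≤ a) (hb : 0 ≤ b) (h : a ⊓ b = 0) {c d : ℝ}
    (hc : 0 ≤ c) (hd : 0 ≤ d) : (c • a) ⊓ (d • b) = 0 := by
  set M := max c d with hM
  have hM0 : 0 ≤ M := le_max_of_le_left hc
  have h1 : (c • a) ⊓ (d • b) ≤ (M • a) ⊓ (M • b) := by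
    refine inf_le_inf ?_ ?_
    · have : (0:E) ≤ (M - c) • a := aux_smul_nonneg (by simp [hM, le_max_left]) ha
      rw [sub_smul, sub_nonneg] at this; exact this
    · have : (0:E) ≤ (M - d) • b := aux_smul_nonneg (by simp [hM, le_max_right]) hb
      rw [sub_smul, sub_nonneg] at this; exact this
  rw [← aux_smul_inf hM0, h, smul_zero] at h1
  exact le_antisymm h1 (le_inf (aux_smul_nonneg hc ha) (aux_smul_nonneg hd hb))

end Aux2

section LemA
variable {E : Type*} [NormedAddCommGroup E] [Lattice E] [HasSolidNorm E] [IsOrderedAddMonoid E]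
  [NormedSpace ℝ E]

/-- For a disjoint weakly null sequence and a positive functional, `f |x n| → 0`. -/
lemma lemA (x : ℕ → E) (hd : DisjointSeq x) (hw : WeaklyNull x) (f : E →L[ℝ] ℝ)
    (hf : ∀ v : E, 0 ≤ v → 0 ≤ f v) : Tendsto (fun n => f |x n|) atTop (𝓝 0) := by
  classical
  by_contra hcon
  -- extract ε and a subsequence with f |x n| ≥ ε
  have hfreq : ∃ ε > 0, ∃ᶠ n in atTop, ε ≤ f |x n| := by
    by_contra h2
    push_neg at h2
    refine hcon (Metric.tendsto_atTop.mpr (fun ε hε => ?_))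
    have := h2 ε hε
    obtain ⟨N, hN⟩ := Filter.eventually_atTop.mp this
    refine ⟨N, fun n hn => ?_⟩
    rw [Real.dist_eq, sub_zero, abs_of_nonneg (hf _ (abs_nonneg _))]
    exact hN n hn
  obtain ⟨ε, hε, hfr⟩ := hfreq
  obtain ⟨φ, hφ, hφε⟩ := Filter.extraction_of_frequently_atTop hfr
  set y : ℕ → E := x ∘ φ with hy
  have hyd : ∀ n k, n ≠ k → |y n| ⊓ |y k| = 0 := fun n k hnk =>
    hd (φ n) (φ k) (fun h => hnk (hφ.injective h))
  have hyw : ∀ g : E →L[ℝ] ℝ, Tendsto (fun n => g (y n)) atTop (𝓝 0) := fun g =>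
    (hw g).comp hφ.tendsto_atTop
  have hyε : ∀ k, ε ≤ f |y k| := hφε
  -- every point of the convex hull of the range of `y` satisfies `ε ≤ f |p|`
  have hhull : ∀ p ∈ convexHull ℝ (Set.range y), ε ≤ f |p| := by
    intro p hp
    rw [convexHull_eq] at hp
    obtain ⟨ι, t, wt, z, hw0, hw1, hz, hcm⟩ := hp
    rw [Finset.centerMass_eq_of_sum_1 _ _ hw1] at hcm
    -- choose indices
    have hzy : ∀ i ∈ t, ∃ m, y m = z i := fun i hi => hz i hi
    set g : ι → ℕ := fun i => if h : i ∈ t then (hzy i h).choose else 0 with hg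
    have hgy : ∀ i ∈ t, y (g i) = z i := by
      intro i hi
      simp only [hg, dif_pos hi]
      exact (hzy i hi).choose_spec
    have hp1 : p = ∑ i ∈ t, wt i • y (g i) := by
      rw [← hcm]
      exact (Finset.sum_congr rfl (fun i hi => by rw [hgy i hi])).symm
    -- regroup along fibers of g
    set s : Finset ℕ := t.image g with hs
    set W : ℕ → ℝ := fun b => ∑ i ∈ t.filter (fun i => g i = b), wt i with hW
    have hmaps : ∀ i ∈ t, g i ∈ s := fun i hi => Finset.mem_image_of_mem g hi
    have hW0 : ∀ b, 0 ≤ W b := fun b =>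
      Finset.sum_nonneg (fun i hi => hw0 i (Finset.mem_filter.mp hi).1)
    have hW1 : ∑ b ∈ s, W b = 1 := by
      rw [hW, Finset.sum_fiberwise_of_maps_to hmaps, hw1]
    have hp2 : p = ∑ b ∈ s, W b • y b := by
      rw [hp1, ← Finset.sum_fiberwise_of_maps_to hmaps (fun i => wt i • y (g i))]
      refine Finset.sum_congr rfl (fun b _ => ?_)
      rw [hW, Finset.sum_smul]
      refine Finset.sum_congr rfl (fun i hi => ?_)
      rw [(Finset.mem_filter.mp hi).2]
    -- compute |p|
    have habs : |p| = ∑ b ∈ s, W b • |y b| := by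
      rw [hp2, aux_abs_sum s (fun b => W b • y b) (fun i _ j _ hij => by
        rw [aux_abs_smul (hW0 i), aux_abs_smul (hW0 j)]
        exact aux_disj_smul (abs_nonneg _) (abs_nonneg _) (hyd i j hij) (hW0 i) (hW0 j))]
      exact Finset.sum_congr rfl (fun b _ => aux_abs_smul (hW0 b) (y b))
    rw [habs, map_sum]
    calc ε = ε * ∑ b ∈ s, W b := by rw [hW1, mul_one]
    _ = ∑ b ∈ s, ε * W b := Finset.mul_sum _ _ _
    _ ≤ ∑ b ∈ s, f (W b • |y b|) := by
      refine Finset.sum_le_sum (fun b _ => ?_)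
      rw [map_smul, smul_eq_mul, mul_comm ε (W b)]
      exact mul_le_mul_of_nonneg_left (hyε b) (hW0 b)
  -- pass to the closure
  have hcont : Continuous fun p : E => f |p| := by
    have habs : Continuous fun p : E => |p| := by
      have : ∀ p : E, |p| = p ⊔ -p := fun p => rfl
      simp only [this]
      exact continuous_id.sup continuous_neg
    exact f.continuous.comp habs
  have hclos : ∀ p ∈ closure (convexHull ℝ (Set.range y)), ε ≤ f |p| := by
    have : closure (convexHull ℝ (Set.range y)) ⊆ {p : E | ε ≤ f |p|} :=
      closure_minimal hhull (isClosed_le continuous_const hcont)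
    exact this
  have h0 : (0 : E) ∉ closure (convexHull ℝ (Set.range y)) := by
    intro h
    have := hclos 0 h
    rw [abs_zero, map_zero] at this
    linarith
  obtain ⟨g, u, hg1, hg2⟩ := geometric_hahn_banach_closed_point
    ((convex_convexHull ℝ _).closure) isClosed_closure h0
  rw [map_zero] at hg2
  have hmem : ∀ k, y k ∈ closure (convexHull ℝ (Set.range y)) := fun k =>
    subset_closure (subset_convexHull ℝ _ (Set.mem_range_self k))
  have hev : ∀ᶠ k in atTop, u < g (y k) := (hyw g).eventually (eventually_gt_nhds hg2)
  obtain ⟨k, hk⟩ := hev.exists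
  exact absurd (hg1 (y k) (hmem k)) (not_lt.mpr hk.le)

end LemA

section LemB
variable {E : Type*} [NormedAddCommGroup E] [NormedSpace ℝ E]

/-- Weakly null sequences are norm bounded. -/
lemma lemB (x : ℕ → E) (hw : WeaklyNull x) : ∃ C : ℝ, ∀ n, ‖x n‖ ≤ C := by
  have hpt : ∀ f : E →L[ℝ] ℝ, ∃ C, ∀ n, ‖(inclusionInDoubleDual ℝ E (x n)) f‖ ≤ C := by
    intro f
    have habs : Tendsto (fun n => |f (x n)|) atTop (𝓝 0) := by
      simpa using (hw f).abs
    obtain ⟨C, hC⟩ := habs.bddAbove_range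
    refine ⟨C, fun n => ?_⟩
    have : |f (x n)| ≤ C := hC (Set.mem_range_self n)
    simpa [NormedSpace.inclusionInDoubleDual, Real.norm_eq_abs] using this
  obtain ⟨C, hC⟩ := banach_steinhaus hpt
  refine ⟨C, fun n => ?_⟩
  have := (inclusionInDoubleDualLi ℝ (E := E)).norm_map (x n)
  rw [← this]
  exact hC n

/-- From `ε ≤ ‖g‖` on a Banach lattice, find a positive almost-norming vector. -/
lemma lemC {F : Type*} [NormedAddCommGroup F] [Lattice F] [HasSolidNorm F] [IsOrderedAddMonoid F]
    [NormedSpace ℝ F]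
    (g : F →L[ℝ] ℝ) {ε : ℝ} (hε : 0 < ε) (hg : ε ≤ ‖g‖) :
    ∃ u : F, 0 ≤ u ∧ ‖u‖ ≤ 1 ∧ ε / 4 < |g u| := by
  obtain ⟨v, hv1, hv2⟩ : ∃ v : F, ‖v‖ ≤ 1 ∧ ε / 2 < |g v| := by
    by_contra h
    push_neg at h
    have : ‖g‖ ≤ ε / 2 := by
      refine g.opNorm_le_bound (by linarith) (fun w => ?_)
      rcases eq_or_ne w 0 with rfl | hw
      · simp
      have hnw : (0:ℝ) < ‖w‖ := norm_pos_iff.mpr hw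
      have h1 : ‖‖w‖⁻¹ • w‖ ≤ 1 := by
        rw [norm_smul, norm_inv, norm_norm, inv_mul_cancel₀ hnw.ne']
      have h2 := h (‖w‖⁻¹ • w) h1
      rw [map_smul, smul_eq_mul, abs_mul, abs_inv, abs_norm] at h2
      rw [Real.norm_eq_abs]
      calc |g w| = ‖w‖ * (‖w‖⁻¹ * |g w|) := by field_simp
      _ ≤ ‖w‖ * (ε / 2) := by
        refine mul_le_mul_of_nonneg_left h2 hnw.le
      _ = ε / 2 * ‖w‖ := mul_comm _ _
    linarith
  have hsplit : ε / 2 < |g v⁺| + |g v⁻| := by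
    have : g v = g v⁺ - g v⁻ := by rw [← map_sub, posPart_sub_negPart]
    calc ε / 2 < |g v| := hv2
    _ = |g v⁺ - g v⁻| := by rw [this]
    _ ≤ |g v⁺| + |g v⁻| := abs_sub _ _
  have hvp : ‖v⁺‖ ≤ 1 := by
    refine le_trans (norm_le_norm_of_abs_le_abs ?_) hv1
    rw [abs_of_nonneg (posPart_nonneg v), ← posPart_add_negPart v]
    exact le_add_of_nonneg_right (negPart_nonneg v)
  have hvn : ‖v⁻‖ ≤ 1 := by
    refine le_trans (norm_le_norm_of_abs_le_abs ?_) hv1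
    rw [abs_of_nonneg (negPart_nonneg v), ← posPart_add_negPart v]
    exact le_add_of_nonneg_left (posPart_nonneg v)
  rcases le_or_gt (|g v⁺|) (|g v⁻|) with hc | hc
  · exact ⟨v⁻, negPart_nonneg v, hvn, by linarith⟩
  · exact ⟨v⁺, posPart_nonneg v, hvp, by linarith⟩

end LemB

/-- If every norm-bounded disjoint sequence of positive elements of `E₂` is weakly null
(equivalently, the norm of `E₂*` is order continuous) and `A : E₁ × E₂ → ℝ` is a positive
almost Dunford-Pettis continuous bilinear form, then the operator `T : E₁ → E₂*`,
`T x = A (x, ·)`, is almost Dunford-Pettis. -/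
theorem linearization_almostDunfordPettis {E₁ E₂ : Type*}
    [NormedAddCommGroup E₁] [Lattice E₁] [HasSolidNorm E₁] [IsOrderedAddMonoid E₁]
    [NormedSpace ℝ E₁] [CompleteSpace E₁]
    [NormedAddCommGroup E₂] [Lattice E₂] [HasSolidNorm E₂] [IsOrderedAddMonoid E₂]
    [NormedSpace ℝ E₂] [CompleteSpace E₂]
    -- the norm of `E₂*` is order continuous, in sequential form:
    (hE₂ : ∀ y : ℕ → E₂, (∀ n, 0 ≤ y n) → (∃ C, ∀ n, ‖y n‖ ≤ C) → DisjointSeq y →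
      WeaklyNull y)
    -- `A` is a positive continuous bilinear form (in curried form, `T = A`)
    (A : E₁ →L[ℝ] E₂ →L[ℝ] ℝ)
    (hApos : ∀ (x : E₁) (y : E₂), 0 ≤ x → 0 ≤ y → 0 ≤ A x y)
    -- `A` is almost Dunford-Pettis
    (hADP : ∀ (x : ℕ → E₁) (y : ℕ → E₂), DisjointSeq x → WeaklyNull x →
      DisjointSeq y → WeaklyNull y → Tendsto (fun n => A (x n) (y n)) atTop (𝓝 0)) :
    -- then `T = A : E₁ → E₂*` is almost Dunford-Pettis
    ∀ x : ℕ → E₁, DisjointSeq x → WeaklyNull x →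
      Tendsto (fun n => ‖A (x n)‖) atTop (𝓝 0) := by
  classical
  intro x hxd hxw
  by_contra hcon
  have hfreq : ∃ ε > 0, ∃ᶠ n in atTop, ε ≤ ‖A (x n)‖ := by
    by_contra h2
    push_neg at h2
    refine hcon (Metric.tendsto_atTop.mpr fun ε hε => ?_)
    have := h2 ε hε
    obtain ⟨N, hN⟩ := Filter.eventually_atTop.mp this
    exact ⟨N, fun n hn => by
      rw [Real.dist_eq, sub_zero, abs_of_nonneg (norm_nonneg _)]; exact hN n hn⟩
  obtain ⟨ε, hε, hfr⟩ := hfreq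
  obtain ⟨φ, hφ, hφε⟩ := Filter.extraction_of_frequently_atTop hfr
  set X : ℕ → E₁ := x ∘ φ with hXdef
  have hXd : DisjointSeq X := fun n k hnk => hxd (φ n) (φ k) fun h => hnk (hφ.injective h)
  have hXw : WeaklyNull X := fun f => (hxw f).comp hφ.tendsto_atTop
  obtain ⟨C₀, hC₀⟩ := lemB X hXw
  set C : ℝ := max C₀ 1 with hCdef
  have hC : ∀ k, ‖X k‖ ≤ C := fun k => (hC₀ k).trans (le_max_left _ _)
  have hC1 : (0:ℝ) < C := lt_of_lt_of_le one_pos (le_max_right _ _)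
  set δ : ℝ := ε / 4 with hδdef
  have hδ : 0 < δ := by positivity
  have hexu : ∀ k, ∃ u : E₂, 0 ≤ u ∧ ‖u‖ ≤ 1 ∧ δ < |A (X k) u| := fun k =>
    lemC (A (X k)) hε (hφε k)
  choose u' hu'0 hu'1 hu'δ using hexu
  -- positivity estimates
  have habsA : ∀ (w : E₁) (v : E₂), 0 ≤ v → |A w v| ≤ A |w| v := by
    intro w v hv
    rw [abs_le]
    constructor
    · have hw1 : (0:E₁) ≤ w + |w| := by
        have hng : -w ≤ |w| := (le_sup_right : -w ≤ w ⊔ -w)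
        calc (0:E₁) = w + -w := (add_neg_cancel w).symm
        _ ≤ w + |w| := add_le_add_right hng w
      have h1 : (0:ℝ) ≤ A (w + |w|) v := hApos _ _ hw1 hv
      rw [map_add, ContinuousLinearMap.add_apply] at h1
      linarith
    · have h2 : (0:ℝ) ≤ A (|w| - w) v := by
        refine hApos _ _ ?_ hv
        rw [sub_nonneg]
        exact (le_sup_left : w ≤ w ⊔ -w)
      rw [map_sub, ContinuousLinearMap.sub_apply] at h2
      linarith
  have hAS : ∀ S : E₂, 0 ≤ S → Tendsto (fun n => A |X n| S) atTop (𝓝 0) := by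
    intro S hS
    have hfpos : ∀ v : E₁, 0 ≤ v → 0 ≤ (A.flip S) v := fun v hv => hApos v S hv hS
    have := lemA X hXd hXw (A.flip S) hfpos
    simpa using this
  have hstep : ∀ (N : ℕ) (S : E₂) (c : ℝ), 0 ≤ S → 0 < c → ∃ κ, N < κ ∧ A |X κ| S < c := by
    intro N S c hS hc
    have hev := (hAS S hS).eventually (eventually_lt_nhds hc)
    obtain ⟨N₀, hN₀⟩ := Filter.eventually_atTop.mp hev
    exact ⟨max (N+1) N₀, lt_of_lt_of_le (Nat.lt_succ_self N) (le_max_left _ _),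
      hN₀ _ (le_max_right _ _)⟩
  -- recursive selection
  set c : ℕ → ℝ := fun j => δ / 4 / 4 ^ (j + 1) with hcdef
  have hc : ∀ j, 0 < c j := fun j => by positivity
  have hksel : ∃ k : ℕ → ℕ, StrictMono k ∧
      ∀ j, A |X (k (j+1))| (∑ i ∈ Finset.range (j+1), u' (k i)) < c j := by
    set step : ℕ → ℕ × {v : E₂ // 0 ≤ v} → ℕ × {v : E₂ // 0 ≤ v} := fun j p =>
      ((hstep p.1 p.2.1 (c j) p.2.2 (hc j)).choose,
        ⟨p.2.1 + u' (hstep p.1 p.2.1 (c j) p.2.2 (hc j)).choose,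
          add_nonneg p.2.2 (hu'0 _)⟩) with hstepdef
    set G : ℕ → ℕ × {v : E₂ // 0 ≤ v} :=
      fun j => Nat.rec ((0:ℕ), ⟨u' 0, hu'0 0⟩) step j with hGdef
    set k : ℕ → ℕ := fun j => (G j).1 with hkdef
    have hkspec : ∀ j, k j < k (j+1) ∧ A |X (k (j+1))| ((G j).2.1) < c j := fun j =>
      (hstep (G j).1 (G j).2.1 (c j) (G j).2.2 (hc j)).choose_spec
    have hkmono : StrictMono k := strictMono_nat_of_lt_succ fun j => (hkspec j).1
    have hGS : ∀ j, (G j).2.1 = ∑ i ∈ Finset.range (j+1), u' (k i) := by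
      intro j
      induction j with
      | zero =>
        rw [Finset.range_one, Finset.sum_singleton]
        rfl
      | succ n ih => rw [Finset.sum_range_succ, ← ih]
    refine ⟨k, hkmono, fun j => ?_⟩
    have h := (hkspec j).2
    rwa [hGS j] at h
  obtain ⟨k, hkmono, hksel⟩ := hksel
  set w : ℕ → E₁ := fun j => X (k j) with hwdef
  set u : ℕ → E₂ := fun j => u' (k j) with hudef
  have hwd : DisjointSeq w := fun n m hnm => hXd _ _ fun h => hnm (hkmono.injective h)
  have hww : WeaklyNull w := fun f => (hXw f).comp hkmono.tendsto_atTop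
  have hu0 : ∀ j, 0 ≤ u j := fun j => hu'0 _
  have hu1 : ∀ j, ‖u j‖ ≤ 1 := fun j => hu'1 _
  have huδ : ∀ j, δ < |A (w j) (u j)| := fun j => hu'δ _
  -- the order bound xinf
  have hsum : Summable (fun i => ((1:ℝ)/2) ^ i • u i) := by
    refine Summable.of_norm (Summable.of_nonneg_of_le (fun i => norm_nonneg _) (fun i => ?_)
      (summable_geometric_of_lt_one (r := (1:ℝ)/2) (by norm_num) (by norm_num)))
    rw [norm_smul]
    calc ‖((1:ℝ)/2)^i‖ * ‖u i‖ ≤ ‖((1:ℝ)/2)^i‖ * 1 := by gcongr; exact hu1 i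
    _ = (1/2)^i := by rw [mul_one, Real.norm_eq_abs, abs_of_nonneg (by positivity)]
  set xinf : E₂ := ∑' i, ((1:ℝ)/2) ^ i • u i with hxinfdef
  have hxinf0 : 0 ≤ xinf := tsum_nonneg fun i => aux_smul_nonneg (by positivity) (hu0 i)
  have hux : ∀ i, u i ≤ (2:ℝ) ^ i • xinf := by
    intro i
    have h1 : ((1:ℝ)/2) ^ i • u i ≤ xinf :=
      Summable.le_tsum hsum i fun j _ => aux_smul_nonneg (by positivity) (hu0 j)
    have h2 := aux_smul_mono (by positivity : (0:ℝ) ≤ 2 ^ i) h1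
    rwa [smul_smul, show (2:ℝ)^i * (1/2)^i = 1 by rw [← mul_pow]; norm_num, one_smul] at h2
  -- the disjoint positive sequence z
  set T : ℕ → E₂ := fun j => ∑ i ∈ Finset.range j, u i with hTdef
  have hT0 : ∀ j, 0 ≤ T j := fun j => Finset.sum_nonneg fun i _ => hu0 i
  set z : ℕ → E₂ := fun j => (u j - (4:ℝ) ^ j • T j - ((1:ℝ)/2) ^ j • xinf)⁺ with hzdef
  have hz0 : ∀ j, 0 ≤ z j := fun j => posPart_nonneg _
  have hzu : ∀ j, z j ≤ u j := by
    intro j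
    have h1 : u j - (4:ℝ)^j • T j - ((1:ℝ)/2)^j • xinf ≤ u j := by
      rw [sub_sub]
      exact sub_le_self _ (add_nonneg (aux_smul_nonneg (by positivity) (hT0 j))
        (aux_smul_nonneg (by positivity) hxinf0))
    calc z j ≤ (u j)⁺ := posPart_mono h1
    _ = u j := posPart_eq_self.mpr (hu0 j)
  have hz1 : ∀ j, ‖z j‖ ≤ 1 := fun j => le_trans (norm_le_norm_of_abs_le_abs
    (by rw [abs_of_nonneg (hz0 j), abs_of_nonneg (hu0 j)]; exact hzu j)) (hu1 j)
  have hzd : DisjointSeq z := by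
    have key : ∀ i j, i < j → z i ⊓ z j = 0 := by
      intro i j hij
      have hPi : z i ≤ (u i - ((1:ℝ)/2) ^ i • xinf)⁺ := by
        refine posPart_mono ?_
        rw [sub_right_comm]
        exact sub_le_self _ (aux_smul_nonneg (by positivity) (hT0 i))
      have hQj : z j ≤ (2:ℝ)^j • (xinf - (2:ℝ)^j • u i)⁺ := by
        have h1 : u j - (4:ℝ)^j • T j - ((1:ℝ)/2)^j • xinf ≤ (2:ℝ)^j • xinf - (4:ℝ)^j • u i := by
          have ha : u j ≤ (2:ℝ)^j • xinf := hux j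
          have hb : (4:ℝ)^j • u i ≤ (4:ℝ)^j • T j := by
            refine aux_smul_mono (by positivity) ?_
            exact Finset.single_le_sum (fun m _ => hu0 m) (Finset.mem_range.mpr hij)
          have hcc : (0:E₂) ≤ ((1:ℝ)/2)^j • xinf := aux_smul_nonneg (by positivity) hxinf0
          calc u j - (4:ℝ)^j • T j - ((1:ℝ)/2)^j • xinf ≤ u j - (4:ℝ)^j • T j :=
            sub_le_self _ hcc
          _ ≤ (2:ℝ)^j • xinf - (4:ℝ)^j • u i := sub_le_sub ha hb
        have h2 : (2:ℝ)^j • xinf - (4:ℝ)^j • u i = (2:ℝ)^j • (xinf - (2:ℝ)^j • u i) := by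
          rw [smul_sub, smul_smul, show (2:ℝ)^j * 2^j = 4^j by rw [← mul_pow]; norm_num]
        calc z j ≤ ((2:ℝ)^j • xinf - (4:ℝ)^j • u i)⁺ := posPart_mono h1
        _ = ((2:ℝ)^j • (xinf - (2:ℝ)^j • u i))⁺ := by rw [h2]
        _ = (2:ℝ)^j • (xinf - (2:ℝ)^j • u i)⁺ := aux_smul_posPart (by positivity) _
      have hkey : (u i - ((1:ℝ)/2)^i • xinf)⁺ ⊓ (xinf - (2:ℝ)^j • u i)⁺ = 0 := by
        refine aux_key (hu0 i) hxinf0 (by positivity) (by positivity) ?_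
        rw [div_pow, one_pow, div_mul_eq_mul_div, one_mul, le_div_iff₀ (by positivity), one_mul]
        exact pow_le_pow_right₀ one_le_two hij.le
      have hfin : z i ⊓ z j ≤ (2:ℝ)^j •
          ((u i - ((1:ℝ)/2)^i • xinf)⁺ ⊓ (xinf - (2:ℝ)^j • u i)⁺) := by
        rw [aux_smul_inf (by positivity)]
        refine inf_le_inf (hPi.trans ?_) hQj
        have h3 : (0:E₂) ≤ ((2:ℝ)^j - 1) • (u i - ((1:ℝ)/2)^i • xinf)⁺ :=
          aux_smul_nonneg (by simp [one_le_pow₀, one_le_two]) (posPart_nonneg _)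
        rw [sub_smul, one_smul, sub_nonneg] at h3
        exact h3
      rw [hkey, smul_zero] at hfin
      exact le_antisymm hfin (le_inf (hz0 i) (hz0 j))
    intro n m hnm
    rcases lt_or_gt_of_ne hnm with h | h
    · rw [abs_of_nonneg (hz0 n), abs_of_nonneg (hz0 m)]; exact key n m h
    · rw [abs_of_nonneg (hz0 n), abs_of_nonneg (hz0 m), inf_comm]; exact key m n h
  have hzw : WeaklyNull z := hE₂ z hz0 ⟨1, hz1⟩ hzd
  -- quantitative lower bound
  set M : ℝ := ‖A‖ * C * ‖xinf‖ with hMdef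
  have hM0 : 0 ≤ M := by positivity
  have hAxinf : ∀ j, A |w j| xinf ≤ M := by
    intro j
    calc A |w j| xinf ≤ |A |w j| xinf| := le_abs_self _
    _ ≤ ‖A |w j|‖ * ‖xinf‖ := by rw [← Real.norm_eq_abs]; exact (A |w j|).le_opNorm xinf
    _ ≤ (‖A‖ * ‖|w j|‖) * ‖xinf‖ := by gcongr; exact A.le_opNorm _
    _ = ‖A‖ * ‖w j‖ * ‖xinf‖ := by rw [norm_abs_eq_norm]
    _ ≤ M := by
      rw [hMdef]
      gcongr
      exact hC (k j)
  have hApos' : ∀ (v : E₁) (a b : E₂), 0 ≤ v → a ≤ b → A v a ≤ A v b := by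
    intro v a b hv hab
    have := hApos v (b - a) hv (sub_nonneg.mpr hab)
    rw [map_sub, sub_nonneg] at this
    exact this
  have hTj : ∀ j, (4:ℝ)^(j+1) * A |w (j+1)| (T (j+1)) < δ / 4 := by
    intro j
    have h1 : A |w (j+1)| (T (j+1)) < c j := hksel j
    have h4 : (0:ℝ) < (4:ℝ)^(j+1) := by positivity
    have h5 : (4:ℝ)^(j+1) * A |w (j+1)| (T (j+1)) < (4:ℝ)^(j+1) * c j :=
      mul_lt_mul_of_pos_left h1 h4
    have h6 : (4:ℝ)^(j+1) * c j = δ / 4 := by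
      rw [hcdef]
      field_simp
    rw [h6] at h5
    exact h5
  have hlow : ∀ j, 1 ≤ j → ((1:ℝ)/2)^j * M < δ / 4 → δ / 2 ≤ |A (w j) (z j)| := by
    intro j hj hMj
    obtain ⟨jj, rfl⟩ : ∃ jj, j = jj + 1 := ⟨j - 1, by omega⟩
    set R : E₂ := (4:ℝ)^(jj+1) • T (jj+1) + ((1:ℝ)/2)^(jj+1) • xinf with hRdef
    have hR0 : 0 ≤ R := add_nonneg (aux_smul_nonneg (by positivity) (hT0 _))
      (aux_smul_nonneg (by positivity) hxinf0)
    have hz_eq : z (jj+1) = (u (jj+1) - R)⁺ := by rw [hzdef]; simp only [hRdef, sub_sub]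
    have hz_decomp : u (jj+1) - z (jj+1) = u (jj+1) ⊓ R := by
      rw [hz_eq, inf_eq_sub_posPart_sub]
    have herr : |A (w (jj+1)) (u (jj+1) - z (jj+1))| ≤ δ/4 + δ/4 := by
      have h0 : 0 ≤ u (jj+1) - z (jj+1) := sub_nonneg.mpr (hzu (jj+1))
      have h1 : |A (w (jj+1)) (u (jj+1) - z (jj+1))| ≤ A |w (jj+1)| (u (jj+1) - z (jj+1)) :=
        habsA _ _ h0
      have h2 : u (jj+1) - z (jj+1) ≤ R := by rw [hz_decomp]; exact inf_le_right
      have h3 : A |w (jj+1)| (u (jj+1) - z (jj+1)) ≤ A |w (jj+1)| R :=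
        hApos' _ _ _ (abs_nonneg _) h2
      have h4 : A |w (jj+1)| R = (4:ℝ)^(jj+1) * A |w (jj+1)| (T (jj+1))
          + ((1:ℝ)/2)^(jj+1) * A |w (jj+1)| xinf := by
        rw [hRdef, map_add, map_smul, map_smul, smul_eq_mul, smul_eq_mul]
      have h5 : ((1:ℝ)/2)^(jj+1) * A |w (jj+1)| xinf ≤ ((1:ℝ)/2)^(jj+1) * M :=
        mul_le_mul_of_nonneg_left (hAxinf _) (by positivity)
      have h6 := hTj jj
      calc |A (w (jj+1)) (u (jj+1) - z (jj+1))| ≤ A |w (jj+1)| R := h1.trans h3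
      _ = (4:ℝ)^(jj+1) * A |w (jj+1)| (T (jj+1)) + ((1:ℝ)/2)^(jj+1) * A |w (jj+1)| xinf := h4
      _ ≤ δ/4 + δ/4 := by
        refine add_le_add h6.le (h5.trans hMj.le)
    have htri : |A (w (jj+1)) (u (jj+1))| ≤ |A (w (jj+1)) (z (jj+1))|
        + |A (w (jj+1)) (u (jj+1) - z (jj+1))| := by
      have heq : A (w (jj+1)) (u (jj+1)) = A (w (jj+1)) (z (jj+1))
          + A (w (jj+1)) (u (jj+1) - z (jj+1)) := by
        rw [← map_add]
        congr 1
        abel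
      rw [heq]
      exact abs_add_le _ _
    have := huδ (jj+1)
    have hδ4 : δ = δ/4 + δ/4 + δ/2 := by ring
    linarith
  -- derive the contradiction
  have htend := hADP w z hwd hww hzd hzw
  have hev1 : ∀ᶠ j in atTop, |A (w j) (z j)| < δ/2 := by
    have h := htend.abs
    rw [abs_zero] at h
    exact h.eventually (eventually_lt_nhds (by positivity))
  have hev2 : ∀ᶠ j in atTop, ((1:ℝ)/2)^j * M < δ/4 := by
    have h := (tendsto_pow_atTop_nhds_zero_of_lt_one (by norm_num : (0:ℝ) ≤ 1/2)
      (by norm_num)).mul_const M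
    rw [zero_mul] at h
    exact h.eventually (eventually_lt_nhds (by positivity))
  have hev3 : ∀ᶠ j in atTop, 1 ≤ j := Filter.eventually_ge_atTop 1
  obtain ⟨j, h1, h2, h3⟩ := (hev1.and (hev2.and hev3)).exists
  exact absurd (hlow j h3 h2) (not_le.mpr h1)


end
end

section
/- Let m ∈ ℕ, let E_1, …, E_m, F be Banach lattices, let φ_j ∈ E_j* be positive functionals (j = 1,…,m), let y_0 ∈ F with y_0 ≥ 0, and let B : E_1 × ⋯ × E_m → F be a positive continuous m-linear operator such that B(x_1,…,x_m) ≥ φ_1(x_1) ⋯ φ_m(x_m) · y_0 for all positive x_j ∈ E_j. Then for all positive x_j** ∈ E_j** (j = 1,…,m) and every positive y* ∈ F*, B*[m+1](x_1**,…,x_m**)(y*) ≥ x_1**(φ_1) ⋯ x_m**(φ_m) · y*(y_0). -/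
universe u v

noncomputable section

open Filter Topology NormedSpace

/-- A continuous linear functional on a Banach lattice is positive if it takes nonnegative
values at positive elements. -/
def PosFunctional {E : Type*} [NormedAddCommGroup E] [Lattice E] [IsOrderedAddMonoid E] [HasSolidNorm E] [NormedSpace ℝ E]
    (f : StrongDual ℝ E) : Prop :=
  ∀ x : E, 0 ≤ x → 0 ≤ f x

/-- An element of the bidual of a Banach lattice is positive if it takes nonnegative values
at positive functionals. -/
def PosBidual {E : Type*} [NormedAddCommGroup E] [Lattice E] [IsOrderedAddMonoid E] [HasSolidNorm E] [NormedSpace ℝ E]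
    (Φ : StrongDual ℝ (StrongDual ℝ E)) : Prop :=
  ∀ f : StrongDual ℝ E, PosFunctional f → 0 ≤ Φ f

theorem arens_key : ∀ (m : ℕ) (E : Fin m → Type u)
    [∀ i, NormedAddCommGroup (E i)] [∀ i, Lattice (E i)]
    [∀ i, IsOrderedAddMonoid (E i)] [∀ i, HasSolidNorm (E i)] [∀ i, NormedSpace ℝ (E i)]
    (A : ContinuousMultilinearMap ℝ E ℝ) (φ : ∀ i, StrongDual ℝ (E i)) (c : ℝ)
    (_ : ∀ z : ∀ i, E i, (∀ i, 0 ≤ z i) → 0 ≤ A z)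
    (_ : ∀ z : ∀ i, E i, (∀ i, 0 ≤ z i) → (∏ i, φ i (z i)) * c ≤ A z)
    (x : ∀ i, StrongDual ℝ (StrongDual ℝ (E i))) (_ : ∀ i, PosBidual (x i)),
    (∏ i, x i (φ i)) * c ≤ arensFunctional m E x A
  | 0, E, _, _, _, _, _, A, φ, c, hApos, hA, x, hx => by
      have := hA (fun i => i.elim0) (fun i => i.elim0)
      simpa [arensFunctional] using this
  | (m+1), E, _, _, _, _, _, A, φ, c, hApos, hA, x, hx => by
      set C := continuousMultilinearCurryRightEquiv ℝ E ℝ A with hC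
      have hred : arensFunctional (m+1) E x A
          = arensFunctional m (fun i => E i.castSucc) (fun i => x i.castSucc)
            ((x (Fin.last m)).compContinuousMultilinearMap C) := rfl
      rw [hred]
      have hsnoc : ∀ (z : ∀ i : Fin m, E i.castSucc) (w : E (Fin.last m)),
          (∀ i, 0 ≤ z i) → 0 ≤ w → ∀ i, 0 ≤ Fin.snoc z w i := by
        intro z w hz hw i
        refine Fin.lastCases ?_ ?_ i
        · simpa using hw
        · intro j; simpa using hz j
      have hposC : ∀ z : ∀ i : Fin m, E i.castSucc, (∀ i, 0 ≤ z i) →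
          PosFunctional (C z) := by
        intro z hz w hw
        have := hApos (Fin.snoc z w) (hsnoc z w hz hw)
        simpa [hC, continuousMultilinearCurryRightEquiv_apply] using this
      refine le_trans ?_ (arens_key m (fun i => E i.castSucc)
        ((x (Fin.last m)).compContinuousMultilinearMap C)
        (fun i => φ i.castSucc) (c * x (Fin.last m) (φ (Fin.last m)))
        ?_ ?_ (fun i => x i.castSucc) (fun i => hx i.castSucc))
      · rw [Fin.prod_univ_castSucc]; ring_nf; exact le_refl _
      · intro z hz
        simpa using hx (Fin.last m) (C z) (hposC z hz)
      · intro z hz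
        set cz := (∏ i : Fin m, φ i.castSucc (z i)) * c with hcz
        have hdom : PosFunctional (C z - cz • φ (Fin.last m)) := by
          intro w hw
          have h1 := hA (Fin.snoc z w) (hsnoc z w hz hw)
          rw [Fin.prod_univ_castSucc] at h1
          simp only [Fin.snoc_castSucc, Fin.snoc_last] at h1
          simp only [ContinuousLinearMap.sub_apply, ContinuousLinearMap.smul_apply,
            smul_eq_mul, hC, continuousMultilinearCurryRightEquiv_apply, sub_nonneg]
          calc cz * (φ (Fin.last m)) w
              = (∏ i : Fin m, φ i.castSucc (z i)) * (φ (Fin.last m)) w * c := by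
                rw [hcz]; ring
            _ ≤ A (Fin.snoc z w) := h1
        have h2 := hx (Fin.last m) _ hdom
        rw [map_sub, map_smul, smul_eq_mul, sub_nonneg] at h2
        calc (∏ i : Fin m, φ i.castSucc (z i)) * (c * x (Fin.last m) (φ (Fin.last m)))
            = cz * x (Fin.last m) (φ (Fin.last m)) := by rw [hcz]; ring
          _ ≤ x (Fin.last m) (C z) := h2
          _ = ((x (Fin.last m)).compContinuousMultilinearMap C) z := rfl


/-- If `B` is a positive continuous `m`-linear operator between Banach lattices with
`B (x 1, …, x m) ≥ φ 1 (x 1) ⋯ φ m (x m) • y₀` for all positive `x j`, where the `φ j` are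
positive functionals and `y₀ ≥ 0`, then the Arens extension satisfies
`B*[m+1] (x 1**, …, x m**) (y*) ≥ x 1** (φ 1) ⋯ x m** (φ m) * y* (y₀)` for all positive
`x j**` and every positive `y*`. -/
theorem arensExtVec_lower_bound {m : ℕ} {E : Fin m → Type u}
    [∀ i, NormedAddCommGroup (E i)] [∀ i, Lattice (E i)]
    [∀ i, IsOrderedAddMonoid (E i)] [∀ i, HasSolidNorm (E i)] [∀ i, NormedSpace ℝ (E i)]
    [∀ i, CompleteSpace (E i)]
    {F : Type v} [NormedAddCommGroup F] [Lattice F] [IsOrderedAddMonoid F]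
    [HasSolidNorm F] [NormedSpace ℝ F] [CompleteSpace F]
    (B : ContinuousMultilinearMap ℝ E F)
    (hBpos : ∀ z : ∀ i, E i, (∀ i, 0 ≤ z i) → 0 ≤ B z)
    (φ : ∀ i, StrongDual ℝ (E i)) (hφ : ∀ i, PosFunctional (φ i))
    (y₀ : F) (hy₀ : 0 ≤ y₀)
    (hB : ∀ z : ∀ i, E i, (∀ i, 0 ≤ z i) → (∏ i, φ i (z i)) • y₀ ≤ B z) :
    ∀ x : ∀ i, StrongDual ℝ (StrongDual ℝ (E i)), (∀ i, PosBidual (x i)) →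
      ∀ g : StrongDual ℝ F, PosFunctional g →
        (∏ i, x i (φ i)) * g y₀ ≤ arensExtVec B x g := by
  intro x hx g hg
  have h := arens_key m E (g.compContinuousMultilinearMap B) φ (g y₀)
    (fun z hz => hg _ (hBpos z hz))
    (fun z hz => by
      have h1 := hg _ (sub_nonneg.2 (hB z hz))
      rw [map_sub, map_smul, smul_eq_mul, sub_nonneg] at h1
      simpa using h1)
    x hx
  exact h

end
end
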